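/- For every commutative ring A, every family of weights R : ℤ → A, every integer n and every natural number i ≥ 1, the following identity holds: Z_{n−1,n−1}(2i) = (Z_{n,n−1}(2i−1) − R_{n−1}R_{n+1}·Z_{n−2,n+1}(2i−1)) + Σ_{j=1}^{i} (Z_{n−j,n+j−1}(2i−1) − R_{n−j−1}R_{n+j+1}·Z_{n−j−2,n+j+1}(2i−1)) · ∏_{ℓ=1}^{j} R_{n−ℓ}. -/

import Mathlib

open Finset

variable {A : Type*} [CommRing A]

/-- End height of a walk starting at a given height, with steps given by a list of
Booleans (`true` = ascending step `+1`, `false` = descending step `-1`). -/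
def walkEnd : ℤ → List Bool → ℤ
  | a, [] => a
  | a, true :: s => walkEnd (a + 1) s
  | a, false :: s => walkEnd (a - 1) s

/-- Weight of a walk: the product of `R h` over all descending steps `h → h - 1`. -/
def walkWeight (R : ℤ → A) : ℤ → List Bool → A
  | _, [] => 1
  | a, true :: s => walkWeight R (a + 1) s
  | a, false :: s => R a * walkWeight R (a - 1) s

/-- Whether every height visited by the walk (including the first and last) is `≥ c`. -/
def walkAbove (c : ℤ) : ℤ → List Bool → Bool
  | a, [] => decide (c ≤ a)
  | a, true :: s => decide (c ≤ a) && walkAbove c (a + 1) s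
  | a, false :: s => decide (c ≤ a) && walkAbove c (a - 1) s

/-- `Zw R a b k`: the generating function of walks of length `k` from height `a` to
height `b`, each walk weighted by `R h` per descending step from height `h`. -/
def Zw (R : ℤ → A) (a b : ℤ) (k : ℕ) : A :=
  ∑ s : Fin k → Bool,
    if walkEnd a (List.ofFn s) = b then walkWeight R a (List.ofFn s) else 0

/-- `Zwp R a b k`: the same generating function, restricted to walks staying at
heights `≥ a` ("positive walks"). -/
def Zwp (R : ℤ → A) (a b : ℤ) (k : ℕ) : A :=
  ∑ s : Fin k → Bool,
    if walkEnd a (List.ofFn s) = b ∧ walkAbove a a (List.ofFn s) = true then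
      walkWeight R a (List.ofFn s)
    else 0

/-- `Pdim R a b k`: hard-dimer partition function on the segment `[a,b]`: the sum over
`k`-element subsets `S` of `{a+1, …, b}` with no two consecutive elements of
`∏ i in S, R i` (a dimer on `[i-1,i]` carries weight `R i`). -/
noncomputable def Pdim (R : ℤ → A) (a b : ℤ) (k : ℕ) : A :=
  ∑ S ∈ Finset.powersetCard k (Finset.Icc (a + 1) b),
    if ∀ i ∈ S, i + 1 ∉ S then ∏ i ∈ S, R i else 0

/-- `Vp R g m a b = Σ_{k=1}^{m} g_k • Zw R a b (2k-1)`: grand-canonical generating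
function for walks of odd length from `a` to `b`. -/
def Vp (R : ℤ → A) (g : ℕ → A) (m : ℕ) (a b : ℤ) : A :=
  ∑ k ∈ Finset.Icc 1 m, g k * Zw R a b (2 * k - 1)

/-- The conserved quantities `Γ_{2i}(n)`; `Gam R g m i n` stands for `Γ_{2i}(n)`. -/
def Gam (R : ℤ → A) (g : ℕ → A) (m : ℕ) (i : ℕ) (n : ℤ) : A :=
  if i = 0 then R (n - 1) - Vp R g m (n - 1) (n - 2) + (if n = 0 then 1 else 0)
  else
    Zwp R (n - 1) (n - 1) (2 * i) *
        (R (n - 1) - Vp R g m (n - 1) (n - 2) + (if n = 0 then 1 else 0)) -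
      ∑ j ∈ Finset.Icc 1 i,
        Zwp R (n - 1) (n - 1 + 2 * (j : ℤ)) (2 * i) * Vp R g m (n + 2 * (j : ℤ) - 1) (n - 2)

/-- The symmetric conserved quantities `Γ̃_{2i}(n)`; `Gamt R g m i n` stands
for `Γ̃_{2i}(n)`. -/
def Gamt (R : ℤ → A) (g : ℕ → A) (m : ℕ) (i : ℕ) (n : ℤ) : A :=
  if i = 0 then R n - Vp R g m n (n - 1)
  else
    (Zw R n (n - 1) (2 * i - 1) - R (n - 1) * R (n + 1) * Zw R (n - 2) (n + 1) (2 * i - 1)) *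
        (R n - Vp R g m n (n - 1)) -
      ∑ j ∈ Finset.Icc 1 i,
        (Zw R (n - (j : ℤ)) (n + (j : ℤ) - 1) (2 * i - 1) -
            R (n - (j : ℤ) - 1) * R (n + (j : ℤ) + 1) *
              Zw R (n - (j : ℤ) - 2) (n + (j : ℤ) + 1) (2 * i - 1)) *
          Vp R g m (n + (j : ℤ)) (n - (j : ℤ) - 1)

/-- The master equation: `R i = 0` for `i < 0` and `R n = 1 + V'_{n,n-1}` for `n ≥ 0`. -/
def MasterEq (R : ℤ → A) (g : ℕ → A) (m : ℕ) : Prop :=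
  (∀ i : ℤ, i < 0 → R i = 0) ∧ ∀ n : ℤ, 0 ≤ n → R n = 1 + Vp R g m n (n - 1)

/-- `Zodd R a b i = Zw R a b (2i-1)`, with the convention that for `i = 0`
(walks of length `-1`) it equals `1` if `b = a - 1` and `0` otherwise. -/
def Zodd (R : ℤ → A) (a b : ℤ) (i : ℕ) : A :=
  if i = 0 then (if b = a - 1 then 1 else 0) else Zw R a b (2 * i - 1)

/-- Binomial coefficient with an integer lower index, with the convention that it
vanishes for negative lower index. -/
def Cz (n : ℕ) (p : ℤ) : ℤ := if 0 ≤ p then n.choose p.toNat else 0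

/-!
Splitting the walks of length `k + 1` from `n - j - 1` to `n + j - 1` by their first step, and
the walks of length `k + 1` from `n - j - 2` to `n + j` by their last step, gives
`Z_{n-j-1,n+j-1}(k+1) = D_j(k) + R_{n-j-1} Z_{n-j-2,n+j}(k+1)`, where `D_j` is the `j`-th bracket
of the sum. Iterating from `j = 0` produces the weights `∏ l ∈ Icc 1 j, R (n - l)`, and with
`k + 1 = 2 i` the remainder vanishes at `j = i + 1`: its two ends are `2 i + 2` apart.
-/

section Walks

variable (R : ℤ → A)

lemma Zw_zero (a b : ℤ) : Zw R a b 0 = if a = b then 1 else 0 := by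
  simp [Zw, walkEnd, walkWeight]

lemma Zw_succ (a b : ℤ) (k : ℕ) :
    Zw R a b (k + 1) = Zw R (a + 1) b k + R a * Zw R (a - 1) b k := by
  rw [Zw, ← (Fin.consEquiv fun _ : Fin (k + 1) => Bool).sum_comp, Fintype.sum_prod_type,
    Fintype.sum_bool]
  simp [Zw, List.ofFn_succ, Fin.consEquiv, walkEnd, walkWeight, Finset.mul_sum, mul_ite]

lemma Zw_succ_right (a b : ℤ) (k : ℕ) :
    Zw R a b (k + 1) = Zw R a (b - 1) k + R (b + 1) * Zw R a (b + 1) k := by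
  induction k generalizing a b with
  | zero =>
    simp only [Zw_succ, Zw_zero]
    grind
  | succ k ih =>
    rw [Zw_succ, ih, ih, Zw_succ R a (b - 1), Zw_succ R a (b + 1)]
    ring

lemma walkEnd_le_add_length (a : ℤ) (l : List Bool) : walkEnd a l ≤ a + l.length := by
  induction l generalizing a with
  | nil => simp [walkEnd]
  | cons x l ih =>
    cases x <;> simp only [walkEnd, List.length_cons, Nat.cast_succ] <;>
      linarith [ih (a - 1), ih (a + 1)]

lemma Zw_eq_zero_of_lt (a b : ℤ) (k : ℕ) (h : a + k < b) : Zw R a b k = 0 := by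
  refine Finset.sum_eq_zero fun s _ => if_neg fun hend => ?_
  have := walkEnd_le_add_length a (List.ofFn s)
  rw [List.length_ofFn] at this
  omega

lemma Zw_symm_succ (n j : ℤ) (k : ℕ) :
    Zw R (n - j - 1) (n + j - 1) (k + 1) =
      (Zw R (n - j) (n + j - 1) k -
          R (n - j - 1) * R (n + j + 1) * Zw R (n - j - 2) (n + j + 1) k) +
        R (n - j - 1) * Zw R (n - (j + 1) - 1) (n + (j + 1) - 1) (k + 1) := by
  rw [Zw_succ, Zw_succ_right R (n - (j + 1) - 1) (n + (j + 1) - 1) k]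
  ring_nf

lemma Zw_symm_eq_sum (n : ℤ) (k m : ℕ) :
    Zw R (n - 1) (n - 1) (k + 1) =
      (Zw R n (n - 1) k - R (n - 1) * R (n + 1) * Zw R (n - 2) (n + 1) k) +
        ∑ j ∈ Finset.Icc 1 m,
          (Zw R (n - (j : ℤ)) (n + (j : ℤ) - 1) k -
              R (n - (j : ℤ) - 1) * R (n + (j : ℤ) + 1) *
                Zw R (n - (j : ℤ) - 2) (n + (j : ℤ) + 1) k) *
            ∏ l ∈ Finset.Icc 1 j, R (n - (l : ℤ)) +
        (∏ l ∈ Finset.Icc 1 (m + 1), R (n - (l : ℤ))) *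
          Zw R (n - ((m + 1 : ℕ) : ℤ) - 1) (n + ((m + 1 : ℕ) : ℤ) - 1) (k + 1) := by
  induction m with
  | zero => simpa using Zw_symm_succ R n 0 k
  | succ m ih =>
    rw [ih, Finset.sum_Icc_succ_top (by omega),
      Finset.prod_Icc_succ_top (show 1 ≤ m + 1 + 1 by omega), Zw_symm_succ R n ((m + 1 : ℕ) : ℤ) k]
    push_cast
    ring_nf

end Walks

/-- the identity expressing `Z_{n-1,n-1}(2i)` in terms of the
symmetric combinations of walk generating functions. -/
theorem stmt_16 {A : Type*} [CommRing A] (R : ℤ → A) (n : ℤ) (i : ℕ) (hi : 1 ≤ i) :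
    Zw R (n - 1) (n - 1) (2 * i) =
      (Zw R n (n - 1) (2 * i - 1) -
          R (n - 1) * R (n + 1) * Zw R (n - 2) (n + 1) (2 * i - 1)) +
        ∑ j ∈ Finset.Icc 1 i,
          (Zw R (n - (j : ℤ)) (n + (j : ℤ) - 1) (2 * i - 1) -
              R (n - (j : ℤ) - 1) * R (n + (j : ℤ) + 1) *
                Zw R (n - (j : ℤ) - 2) (n + (j : ℤ) + 1) (2 * i - 1)) *
            ∏ l ∈ Finset.Icc 1 j, R (n - (l : ℤ)) := by
  have hfar : Zw R (n - ((i + 1 : ℕ) : ℤ) - 1) (n + ((i + 1 : ℕ) : ℤ) - 1) (2 * i - 1 + 1) = 0 :=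
    Zw_eq_zero_of_lt R _ _ _ (by push_cast; omega)
  have h := Zw_symm_eq_sum R n (2 * i - 1) i
  rwa [hfar, mul_zero, add_zero, Nat.sub_add_cancel (by omega)] at h
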